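/- arXiv:math/0507409 — 8 statements merged into one kernel-verified Lean document; each statement's English description precedes it below -/
import Mathlib

section
/- Let s ≥ 2 and d > 0 be real numbers, and let x, w be real numbers. Set δ := x² − d·w and μ := d(s² − 6s + d) − s·x. Assume: (a) δ ≥ 0; (b) 0 ≤ μ ≤ d(s−1)²; (c) 0 ≤ −(d(s+3) − 21s + 1)·d − (d − 9s)·x + s·w. Then μ ≤ s(s−1)³. -/
/-- Auxiliary: the purely quadratic-in-μ consequence suffices. -/
lemma aux12 (s d μ : ℝ) (hs : 2 ≤ s) (hd : 0 < d) (hb1 : 0 ≤ μ)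
    (hb2 : μ ≤ d * (s - 1) ^ 2)
    (hG : 0 ≤ μ ^ 2 - d * (2 * s ^ 2 - 3 * s + d) * μ + d ^ 2 * s * (s - 1) ^ 3) :
    μ ≤ s * (s - 1) ^ 3 := by
  have hs0 : (0 : ℝ) < s := by linarith
  by_contra hK
  push_neg at hK
  rcases le_or_gt d 1 with h1 | h1
  · nlinarith [mul_nonneg hb1 (sub_nonneg.2 hs)]
  · have h2 : (0:ℝ) < (s - 1) ^ 2 := by nlinarith
    have hqm : (d * (s - 1) ^ 2) ^ 2 - d * (2 * s ^ 2 - 3 * s + d) * (d * (s - 1) ^ 2)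
        + d ^ 2 * s * (s - 1) ^ 3 < 0 := by
      have hpos := mul_pos (mul_pos (mul_pos hd hd) h2) (sub_pos.2 h1)
      nlinarith [hpos]
    have hK0 : (0:ℝ) ≤ s * (s - 1) ^ 3 := mul_nonneg hs0.le (pow_nonneg (by linarith) 3)
    rcases le_or_gt (s * (s - 1) ^ 3) (d * s * (2 * s - 3)) with hA | hA
    · have hqK : (s * (s - 1) ^ 3) ^ 2 - d * (2 * s ^ 2 - 3 * s + d) * (s * (s - 1) ^ 3)
          + d ^ 2 * s * (s - 1) ^ 3 ≤ 0 := by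
        have : (s * (s - 1) ^ 3) ^ 2 - d * (2 * s ^ 2 - 3 * s + d) * (s * (s - 1) ^ 3)
            + d ^ 2 * s * (s - 1) ^ 3 = (s * (s - 1) ^ 3) * ((s * (s - 1) ^ 3) - d * s * (2 * s - 3)) := by
          ring
        rw [this]
        exact mul_nonpos_of_nonneg_of_nonpos hK0 (by linarith)
      nlinarith [mul_nonneg (sub_nonneg.2 hb2) (neg_nonneg.2 hqK),
        mul_pos (sub_pos.2 hK) (neg_pos.2 hqm),
        mul_nonneg (mul_nonneg (sub_pos.2 (lt_of_lt_of_le hK hb2)).le (sub_pos.2 hK).le)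
          (sub_nonneg.2 hb2),
        mul_nonneg (sub_pos.2 hK).le hG]
    · have hds : d < s * (2 * s - 3) := by
        have h3 : (s - 1) ^ 3 ≤ s * (2 * s - 3) ^ 2 := by
          nlinarith [mul_nonneg (mul_nonneg hs0.le (sub_nonneg.2 hs)) (sub_nonneg.2 hs)]
        have h4 : (0:ℝ) < 2 * s - 3 := by linarith
        nlinarith
      have hd2K : d ^ 2 < s * (s - 1) ^ 3 := by nlinarith
      have hsum : 0 < d * (s - 1) ^ 2 + μ - d * (2 * s ^ 2 - 3 * s + d) := by nlinarith
      nlinarith [mul_nonneg (sub_nonneg.2 hb2) hsum.le]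

/-- Numerical implication underlying Lemma 1.2: with δ = x² − d·w and
μ = d(s² − 6s + d) − s·x, the hypotheses δ ≥ 0, 0 ≤ μ ≤ d(s−1)² and
0 ≤ −(d(s+3) − 21s + 1)·d − (d − 9s)·x + s·w imply μ ≤ s(s−1)³. -/
theorem stmt0 (s d x w δ μ : ℝ) (hs : 2 ≤ s) (hd : 0 < d)
    (hδdef : δ = x ^ 2 - d * w)
    (hμdef : μ = d * (s ^ 2 - 6 * s + d) - s * x)
    (ha : 0 ≤ δ) (hb1 : 0 ≤ μ) (hb2 : μ ≤ d * (s - 1) ^ 2)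
    (hc : 0 ≤ -(d * (s + 3) - 21 * s + 1) * d - (d - 9 * s) * x + s * w) :
    μ ≤ s * (s - 1) ^ 3 := by
  have hs0 : (0 : ℝ) < s := by linarith
  apply aux12 s d μ hs hd hb1 hb2
  have hid : μ ^ 2 - d * (2 * s ^ 2 - 3 * s + d) * μ + d ^ 2 * s * (s - 1) ^ 3
      = s * d * (-(d * (s + 3) - 21 * s + 1) * d - (d - 9 * s) * x + s * w)
        + s ^ 2 * (x ^ 2 - d * w) := by
    rw [hμdef]; ring
  rw [hid, ← hδdef]
  have := mul_nonneg (mul_nonneg hs0.le hd.le) hc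
  have := mul_nonneg (sq_nonneg s) ha
  linarith
end

section
/- (i) Let s ≥ 1, e, d be integers and set z := d − s(e+6) + s². Assume 4 ≤ z ≤ (s−1)² and (s−1)³ ≥ z·(e+s+3). Then 4e ≤ (s−1)³ − 4(s+3) and 4d ≤ s(s−1)((s−1)² − 4) + 4. (ii) Let n ≥ 6 and s ≥ 1, e, d be integers and set z := d − s(e+n+1) + s². Assume n−1 ≤ z ≤ (s−1)² and ((s−1)² − z)² ≥ z·(e+n−1)². Then √(n−1)·(e+n−1) ≤ (s−1)² − (n−1) and √(n−1)·(d−1) ≤ s·((s−1)² − n + 1). -/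
/-- Numerical content of the Speciality Theorem (Theorem 1.4).
(i) case n = 5; (ii) case n ≥ 6. -/
theorem stmt1 :
    (∀ s e d z : ℤ, 1 ≤ s → z = d - s * (e + 6) + s ^ 2 →
      4 ≤ z → z ≤ (s - 1) ^ 2 → (s - 1) ^ 3 ≥ z * (e + s + 3) →
      4 * e ≤ (s - 1) ^ 3 - 4 * (s + 3) ∧
      4 * d ≤ s * (s - 1) * ((s - 1) ^ 2 - 4) + 4) ∧
    (∀ n s e d z : ℤ, 6 ≤ n → 1 ≤ s → z = d - s * (e + n + 1) + s ^ 2 →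
      n - 1 ≤ z → z ≤ (s - 1) ^ 2 →
      ((s - 1) ^ 2 - z) ^ 2 ≥ z * (e + n - 1) ^ 2 →
      Real.sqrt ((n : ℝ) - 1) * ((e : ℝ) + n - 1) ≤ ((s : ℝ) - 1) ^ 2 - ((n : ℝ) - 1) ∧
      Real.sqrt ((n : ℝ) - 1) * ((d : ℝ) - 1) ≤ (s : ℝ) * (((s : ℝ) - 1) ^ 2 - (n : ℝ) + 1)) := by
  constructor
  · intro s e d z hs hz h4 hzs h3
    have he : 4 * e ≤ (s - 1) ^ 3 - 4 * (s + 3) := by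
      rcases le_or_gt (e + s + 3) 0 with h | h
      · nlinarith [pow_pos (show (0:ℤ) < s - 1 + 1 by linarith) 3]
      · nlinarith
    refine ⟨he, ?_⟩
    nlinarith [mul_le_mul_of_nonneg_left he (show (0:ℤ) ≤ s by linarith)]
  · intro n s e d z hn hs hz hzl hzu hq
    set t : ℝ := Real.sqrt ((n : ℝ) - 1) with ht
    have hn1 : (0:ℝ) ≤ (n:ℝ) - 1 := by
      have : (6:ℝ) ≤ (n:ℝ) := by exact_mod_cast hn
      linarith
    have ht2 : t ^ 2 = (n:ℝ) - 1 := Real.sq_sqrt hn1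
    have ht0 : 0 ≤ t := Real.sqrt_nonneg _
    -- cast hypotheses to ℝ
    have hzR : (z:ℝ) = (d:ℝ) - s * (e + n + 1) + s ^ 2 := by exact_mod_cast hz
    have hzlR : (n:ℝ) - 1 ≤ (z:ℝ) := by exact_mod_cast hzl
    have hzuR : (z:ℝ) ≤ ((s:ℝ) - 1) ^ 2 := by exact_mod_cast hzu
    have hqR : (((s:ℝ) - 1) ^ 2 - z) ^ 2 ≥ (z:ℝ) * ((e:ℝ) + n - 1) ^ 2 := by
      exact_mod_cast hq
    have hsR : (1:ℝ) ≤ (s:ℝ) := by exact_mod_cast hs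
    have key : t * ((e:ℝ) + n - 1) ≤ ((s:ℝ) - 1) ^ 2 - (z:ℝ) := by
      rcases le_or_gt ((e:ℝ) + n - 1) 0 with h | h
      · nlinarith [mul_nonpos_of_nonneg_of_nonpos ht0 h]
      · have h1 : (t * ((e:ℝ) + n - 1)) ^ 2 ≤ (((s:ℝ) - 1) ^ 2 - z) ^ 2 := by
          have : t ^ 2 * ((e:ℝ) + n - 1) ^ 2 ≤ (z:ℝ) * ((e:ℝ) + n - 1) ^ 2 := by
            nlinarith [sq_nonneg ((e:ℝ) + n - 1)]
          nlinarith
        have h2 : 0 ≤ t * ((e:ℝ) + n - 1) := mul_nonneg ht0 h.le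
        have h3 : (0:ℝ) ≤ ((s:ℝ) - 1) ^ 2 - z := by linarith
        nlinarith
    constructor
    · linarith
    · nlinarith [mul_le_mul_of_nonneg_left key (show (0:ℝ) ≤ (s:ℝ) by linarith),
        mul_nonneg ht0 (show (0:ℝ) ≤ ((s:ℝ)-1)^2 - z by linarith)]
end

section
/- Let t > 0, ρ > 0, α > 0 be real numbers. Define s := 1 + ρ·sinh(αt)/sinh((α+1)t), let σ ≥ 0 be a real number with σ² = (s−1)² − 2ρ·cosh(t)·(s−1) + ρ², and set E := 2ρ·cosh(t) + 1 − s. Then σ·sinh(αt) = (s−1)·sinh(t), σ·sinh((α+1)t) = ρ·sinh(t), and σ·sinh((α+2)t) = E·sinh(t). -/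
/-!
With `x = α t`, the hypothesis says `(s - 1) sinh (x + t) = ρ sinh x`, and the identity
`sinh² x - 2 cosh t sinh x sinh (x + t) + sinh² (x + t) = sinh² t` turns the defining equation
of `σ²` into `(σ sinh (x + t))² = (ρ sinh t)²`. Taking nonnegative square roots gives the middle
equation; the first follows by cancelling `sinh (x + t)`, and the last from the recurrence
`sinh (x + 2t) = 2 cosh t sinh (x + t) - sinh x`.
-/

namespace Real

theorem sinh_add_add_sinh_sub (x y : ℝ) : sinh (x + y) + sinh (x - y) = 2 * sinh x * cosh y := by
  rw [sinh_add, sinh_sub]; ring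

theorem sinh_sq_sub_two_mul_cosh_mul_sinh_mul_sinh_add_add_sinh_add_sq (x t : ℝ) :
    sinh x ^ 2 - 2 * cosh t * sinh x * sinh (x + t) + sinh (x + t) ^ 2 = sinh t ^ 2 := by
  rw [sinh_add]
  linear_combination sinh t ^ 2 * cosh_sq_sub_sinh_sq x - sinh x ^ 2 * cosh_sq_sub_sinh_sq t

end Real

open Real

/-- Lemma 3.3 ('panoplie'), case Δ > 0:
σ/sinh t = (s−1)/sinh(αt) = ρ/sinh((α+1)t) = E/sinh((α+2)t). -/
theorem stmt3 (t ρ α s σ E : ℝ) (ht : 0 < t) (hρ : 0 < ρ) (hα : 0 < α)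
    (hs : s = 1 + ρ * Real.sinh (α * t) / Real.sinh ((α + 1) * t))
    (hσ0 : 0 ≤ σ)
    (hσ : σ ^ 2 = (s - 1) ^ 2 - 2 * ρ * Real.cosh t * (s - 1) + ρ ^ 2)
    (hE : E = 2 * ρ * Real.cosh t + 1 - s) :
    σ * Real.sinh (α * t) = (s - 1) * Real.sinh t ∧
    σ * Real.sinh ((α + 1) * t) = ρ * Real.sinh t ∧
    σ * Real.sinh ((α + 2) * t) = E * Real.sinh t := by
  have hB : 0 < sinh ((α + 1) * t) := sinh_pos_iff.mpr (by positivity)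
  have hs1 : (s - 1) * sinh ((α + 1) * t) = ρ * sinh (α * t) := by
    rw [hs]; field_simp; ring
  have hsq := sinh_sq_sub_two_mul_cosh_mul_sinh_mul_sinh_add_add_sinh_add_sq (α * t) t
  rw [show α * t + t = (α + 1) * t by ring] at hsq
  have hσB : σ * sinh ((α + 1) * t) = ρ * sinh t := by
    refine (pow_left_inj₀ (by positivity) (by positivity) two_ne_zero).mp ?_
    linear_combination sinh ((α + 1) * t) ^ 2 * hσ + ρ ^ 2 * hsq + ((s - 1) * sinh ((α + 1) * t)
      + ρ * sinh (α * t) - 2 * ρ * cosh t * sinh ((α + 1) * t)) * hs1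
  have hσA : σ * sinh (α * t) = (s - 1) * sinh t := by
    refine mul_right_cancel₀ hB.ne' ?_
    linear_combination sinh (α * t) * hσB - sinh t * hs1
  have hrec := sinh_add_add_sinh_sub ((α + 1) * t) t
  rw [show (α + 1) * t + t = (α + 2) * t by ring, show (α + 1) * t - t = α * t by ring] at hrec
  refine ⟨hσA, hσB, ?_⟩
  rw [hE]
  linear_combination σ * hrec - hσA + 2 * cosh t * hσB
end

section
/- Let t > 0 be a real number. The function f(x) = sinh((x+1)t)/sinh(xt) is strictly decreasing on (0, +∞), and f(x) tends to e^t as x tends to +∞. -/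
/-!
With y = x t the quotient is sinh (y + t) / sinh y = cosh t + sinh t · coth y. The hyperbolic
cotangent is strictly decreasing on (0, ∞) since cosh a sinh b - cosh b sinh a = sinh (b - a) > 0
for a < b, and coth y = 1 + e^{-y} / sinh y tends to 1, so the quotient tends to
cosh t + sinh t = e^t.
-/

open Real Filter Set Topology

lemma Real.tendsto_sinh_atTop : Tendsto sinh atTop atTop :=
  tendsto_atTop_mono' atTop
    ((eventually_ge_atTop 0).mono fun _ hy => self_le_sinh_iff.mpr hy) tendsto_id

lemma Real.strictAntiOn_cosh_div_sinh : StrictAntiOn (fun y => cosh y / sinh y) (Ioi 0) := by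
  intro a (ha : 0 < a) b (hb : 0 < b) hab
  rw [div_lt_div_iff₀ (sinh_pos_iff.mpr hb) (sinh_pos_iff.mpr ha)]
  have : 0 < sinh (b - a) := sinh_pos_iff.mpr (sub_pos.mpr hab)
  rw [sinh_sub] at this
  linarith

lemma Real.cosh_div_sinh_eq_one_add {y : ℝ} (hy : y ≠ 0) :
    cosh y / sinh y = 1 + exp (-y) / sinh y := by
  rw [← cosh_sub_sinh, one_add_div (sinh_ne_zero.mpr hy), add_sub_cancel]

lemma Real.tendsto_cosh_div_sinh_atTop : Tendsto (fun y => cosh y / sinh y) atTop (𝓝 1) := by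
  have h : Tendsto (fun y => 1 + exp (-y) / sinh y) atTop (𝓝 (1 + 0 * 0)) :=
    tendsto_const_nhds.add
      (tendsto_exp_neg_atTop_nhds_zero.mul tendsto_sinh_atTop.inv_tendsto_atTop)
  rw [mul_zero, add_zero] at h
  refine h.congr' ?_
  filter_upwards [eventually_gt_atTop 0] with y hy
  exact (cosh_div_sinh_eq_one_add hy.ne').symm

lemma Real.sinh_add_div_sinh {y : ℝ} (hy : y ≠ 0) (t : ℝ) :
    sinh (y + t) / sinh y = cosh t + sinh t * (cosh y / sinh y) := by
  field_simp [sinh_ne_zero.mpr hy]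
  rw [sinh_add]
  ring

lemma Real.strictAntiOn_sinh_add_div_sinh {t : ℝ} (ht : 0 < t) :
    StrictAntiOn (fun y => sinh (y + t) / sinh y) (Ioi 0) := by
  intro a (ha : 0 < a) b (hb : 0 < b) hab
  simp only [sinh_add_div_sinh ha.ne', sinh_add_div_sinh hb.ne']
  gcongr _ + ?_
  exact mul_lt_mul_of_pos_left (strictAntiOn_cosh_div_sinh ha hb hab) (sinh_pos_iff.mpr ht)

lemma Real.tendsto_sinh_add_div_sinh_atTop (t : ℝ) :
    Tendsto (fun y => sinh (y + t) / sinh y) atTop (𝓝 (exp t)) := by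
  have h := tendsto_const_nhds (x := cosh t) |>.add
    (tendsto_const_nhds (x := sinh t) |>.mul tendsto_cosh_div_sinh_atTop)
  rw [mul_one, cosh_add_sinh] at h
  refine h.congr' ?_
  filter_upwards [eventually_gt_atTop 0] with y hy
  exact (sinh_add_div_sinh hy.ne' t).symm

/-- Definition 3.2, case Δ > 0: f(x) = sinh((x+1)t)/sinh(xt) is strictly
decreasing on (0, ∞) and tends to e^t at +∞. -/
theorem stmt6 (t : ℝ) (ht : 0 < t) :
    StrictAntiOn (fun x : ℝ => Real.sinh ((x + 1) * t) / Real.sinh (x * t)) (Set.Ioi 0) ∧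
    Filter.Tendsto (fun x : ℝ => Real.sinh ((x + 1) * t) / Real.sinh (x * t))
      Filter.atTop (nhds (Real.exp t)) := by
  have hf : (fun x : ℝ => sinh ((x + 1) * t) / sinh (x * t)) =
      (fun y => sinh (y + t) / sinh y) ∘ (· * t) := by
    ext x
    simp only [Function.comp_apply, add_mul, one_mul]
  rw [hf]
  exact ⟨(strictAntiOn_sinh_add_div_sinh ht).comp_strictMonoOn
      (fun _ _ _ _ h => mul_lt_mul_of_pos_right h ht) fun _ hx => mul_pos hx ht,
    (tendsto_sinh_add_div_sinh_atTop t).comp (tendsto_id.atTop_mul_const ht)⟩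
end

section
/- Let t > 0 and c > e^t be real numbers. Then there exists a unique α > 0 such that sinh((α+1)t) = c·sinh(αt). -/
/-- Definition 3.2, case Δ > 0: for c > e^t there is a unique α > 0 with
sinh((α+1)t) = c·sinh(αt). -/
theorem stmt8 (t c : ℝ) (ht : 0 < t) (hc : Real.exp t < c) :
    ∃! α : ℝ, 0 < α ∧ Real.sinh ((α + 1) * t) = c * Real.sinh (α * t) := by
  set u := Real.exp t with hu
  set v := Real.exp (-t) with hv
  have hvu : v < u := Real.exp_lt_exp.2 (by linarith)
  have hv0 : 0 < v := Real.exp_pos _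
  have hcu : 0 < c - u := by linarith
  have hcv : 0 < c - v := by linarith
  have key : ∀ α : ℝ, (Real.sinh ((α + 1) * t) = c * Real.sinh (α * t)) ↔
      Real.exp (α * t) ^ 2 * (c - u) = c - v := by
    intro α
    have ha : (0:ℝ) < Real.exp (α * t) := Real.exp_pos _
    have h1 : Real.exp ((α + 1) * t) = Real.exp (α * t) * u := by
      rw [hu, ← Real.exp_add]; congr 1; ring
    have h2 : Real.exp (-((α + 1) * t)) = (Real.exp (α * t))⁻¹ * v := by
      rw [hv, ← Real.exp_neg, ← Real.exp_add]; congr 1; ring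
    have h3 : Real.exp (-(α * t)) = (Real.exp (α * t))⁻¹ := Real.exp_neg _
    rw [Real.sinh_eq, Real.sinh_eq, h1, h2, h3]
    constructor
    · intro h
      have h' : Real.exp (α * t) * u - (Real.exp (α * t))⁻¹ * v
          = c * (Real.exp (α * t) - (Real.exp (α * t))⁻¹) := by linarith
      field_simp at h'
      nlinarith [h']
    · intro h
      have h' : Real.exp (α * t) * u - (Real.exp (α * t))⁻¹ * v
          = c * (Real.exp (α * t) - (Real.exp (α * t))⁻¹) := by
        field_simp
        nlinarith [h]
      linarith
  set K := (c - v) / (c - u) with hK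
  have hK1 : 1 < K := (one_lt_div hcu).2 (by linarith)
  refine ⟨Real.log K / (2 * t), ⟨?_, ?_⟩, ?_⟩
  · exact div_pos (Real.log_pos hK1) (by linarith)
  · rw [key]
    have : Real.exp (Real.log K / (2 * t) * t) ^ 2 = K := by
      rw [sq, ← Real.exp_add]
      have ht' : (2 : ℝ) * t ≠ 0 := by positivity
      have : Real.log K / (2 * t) * t + Real.log K / (2 * t) * t = Real.log K := by
        field_simp; ring
      rw [this, Real.exp_log (by linarith)]
    rw [this, hK]
    field_simp
  · rintro β ⟨hβ, heq⟩
    have h1 : Real.exp (β * t) ^ 2 * (c - u) = c - v := (key β).1 heq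
    have h2 : Real.exp (β * t) ^ 2 = K := by
      rw [hK]; field_simp; linarith
    have h3 : Real.exp (β * t) = Real.exp (Real.log K / (2 * t) * t) := by
      have hb : (0:ℝ) < Real.exp (β * t) := Real.exp_pos _
      have hx : Real.exp (Real.log K / (2 * t) * t) ^ 2 = K := by
        rw [sq, ← Real.exp_add]
        have : Real.log K / (2 * t) * t + Real.log K / (2 * t) * t = Real.log K := by
          field_simp; ring
        rw [this, Real.exp_log (by linarith)]
      nlinarith [Real.exp_pos (Real.log K / (2 * t) * t)]
    have h4 : β * t = Real.log K / (2 * t) * t := Real.exp_injective h3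
    exact mul_right_cancel₀ (ne_of_gt ht) h4
end

section
/- Let t > 0 and α ≥ 1 be real numbers. Then sinh(αt) ≥ (sinh t)^{1/α}·(sinh((α+1)t))^{(α−1)/α} and sinh(αt) ≥ (sinh t)^{2/(α+1)}·(sinh((α+2)t))^{(α−1)/(α+1)}. -/
/-!
`log ∘ sinh` is concave on `(0, ∞)`, its second derivative being `-1 / sinh² < 0`. Exponentiating
the concavity inequality gives `sinh x ^ a * sinh y ^ b ≤ sinh (a x + b y)` for weights `a + b = 1`,
and both inequalities are instances: `α t = (1/α) t + ((α-1)/α) (α+1) t` and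
`α t = (2/(α+1)) t + ((α-1)/(α+1)) (α+2) t`.
-/

open Real Set

theorem concaveOn_log_sinh : ConcaveOn ℝ (Ioi 0) (log ∘ sinh) := by
  have hsinh : ∀ x ∈ interior (Ioi (0 : ℝ)), sinh x ≠ 0 := fun x hx =>
    (sinh_pos_iff.2 (interior_subset hx)).ne'
  refine concaveOn_of_hasDerivWithinAt2_nonpos (convex_Ioi 0)
    (continuous_sinh.continuousOn.log fun x hx => (sinh_pos_iff.2 hx).ne')
    (f' := fun x => cosh x / sinh x) (f'' := fun x => -1 / sinh x ^ 2) ?_ ?_ ?_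
  · intro x hx
    exact ((hasDerivAt_sinh x).log (hsinh x hx)).hasDerivWithinAt
  · intro x hx
    have h := (hasDerivAt_cosh x).div (hasDerivAt_sinh x) (hsinh x hx)
    exact h.hasDerivWithinAt.congr_deriv (by rw [← cosh_sq_sub_sinh_sq x]; ring)
  · intro x _
    exact div_nonpos_of_nonpos_of_nonneg (by norm_num) (sq_nonneg _)

theorem rpow_mul_rpow_le_of_concaveOn_log {E : Type*} [AddCommMonoid E] [Module ℝ E]
    {s : Set E} {f : E → ℝ} (hf : ConcaveOn ℝ s (log ∘ f)) (hpos : ∀ x ∈ s, 0 < f x)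
    {x y : E} (hx : x ∈ s) (hy : y ∈ s) {a b : ℝ} (ha : 0 ≤ a) (hb : 0 ≤ b) (hab : a + b = 1) :
    f x ^ a * f y ^ b ≤ f (a • x + b • y) := by
  have hlog := hf.2 hx hy ha hb hab
  have hxy := hpos _ (hf.1 hx hy ha hb hab)
  simp only [Function.comp_apply, smul_eq_mul] at hlog
  rw [rpow_def_of_pos (hpos x hx), rpow_def_of_pos (hpos y hy), ← exp_add, ← exp_log hxy]
  exact exp_le_exp.2 (by linarith)

theorem sinh_rpow_mul_sinh_rpow_le {x y a b : ℝ} (hx : 0 < x) (hy : 0 < y) (ha : 0 ≤ a)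
    (hb : 0 ≤ b) (hab : a + b = 1) : sinh x ^ a * sinh y ^ b ≤ sinh (a * x + b * y) :=
  rpow_mul_rpow_le_of_concaveOn_log concaveOn_log_sinh (fun _ h => sinh_pos_iff.2 h)
    (mem_Ioi.2 hx) (mem_Ioi.2 hy) ha hb hab

/-- Inequalities (+) and (++) in the proof of the Proposition of Section 3,
from the concavity of log ∘ sinh. -/
theorem stmt12 (t α : ℝ) (ht : 0 < t) (hα : 1 ≤ α) :
    Real.sinh (α * t) ≥
      Real.sinh t ^ (1 / α) * Real.sinh ((α + 1) * t) ^ ((α - 1) / α) ∧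
    Real.sinh (α * t) ≥
      Real.sinh t ^ (2 / (α + 1)) * Real.sinh ((α + 2) * t) ^ ((α - 1) / (α + 1)) := by
  have hα₀ : 0 < α := by linarith
  have hα₁ : 0 < α + 1 := by linarith
  have hα_sub : 0 ≤ α - 1 := by linarith
  constructor
  · convert sinh_rpow_mul_sinh_rpow_le (y := (α + 1) * t)
      (a := 1 / α) (b := (α - 1) / α) ht (by positivity) (by positivity)
      (by positivity) (by field_simp; ring) using 2
    field_simp
    ring
  · convert sinh_rpow_mul_sinh_rpow_le (y := (α + 2) * t)
      (a := 2 / (α + 1)) (b := (α - 1) / (α + 1)) ht (by positivity) (by positivity)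
      (by positivity) (by field_simp; ring) using 2
    field_simp
    ring
end

section
/- Let a ≥ 1 and t > 0 be real numbers. Then a·sinh((a+1)t) ≤ (a+1)·e^t·sinh(a·t). -/
/-!
Multiplying by `2 exp ((a + 1) t)` turns the inequality into
`(a + 1) e^{2t} - a ≤ e^{2 (a + 1) t}`, which is Bernoulli's inequality
`1 + p s ≤ (1 + s) ^ p` for `s = e^{2t} - 1` and `p = a + 1 ≥ 1`.
-/

open Real

theorem one_add_mul_exp_sub_one_le_exp_mul {p : ℝ} (hp : 1 ≤ p) (u : ℝ) :
    1 + p * (exp u - 1) ≤ exp (u * p) := by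
  have hs : -1 ≤ exp u - 1 := by linarith [exp_pos u]
  simpa [exp_mul] using one_add_mul_self_le_rpow_one_add hs hp

theorem mul_sinh_add_one_mul_le {a : ℝ} (ha : 0 ≤ a) (t : ℝ) :
    a * sinh ((a + 1) * t) ≤ (a + 1) * exp t * sinh (a * t) := by
  have bernoulli := one_add_mul_exp_sub_one_le_exp_mul (p := a + 1) (by linarith) (2 * t)
  rw [show 2 * t * (a + 1) = (t + a * t) + (t + a * t) by ring, two_mul, exp_add, exp_add, exp_add]
    at bernoulli
  rw [sinh_eq, sinh_eq, show (a + 1) * t = t + a * t by ring, exp_neg, exp_neg, exp_add]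
  have hx := exp_pos t
  have hy := exp_pos (a * t)
  generalize exp t = x, exp (a * t) = y at *
  have difference_eq : (a + 1) * x * ((y - y⁻¹) / 2) - a * ((x * y - (x * y)⁻¹) / 2) =
      ((x * y) * (x * y) - (1 + (a + 1) * (x * x - 1))) / (2 * x * y) := by
    field_simp
    ring
  rw [← sub_nonneg, difference_eq]
  exact div_nonneg (by linarith) (by positivity)

theorem stmt15_general (a t : ℝ) (ha : 1 ≤ a) :
    a * Real.sinh ((a + 1) * t) ≤ (a + 1) * Real.exp t * Real.sinh (a * t) :=
  mul_sinh_add_one_mul_le (by linarith) t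

/-- a·sinh((a+1)t) ≤ (a+1)·e^t·sinh(a·t) for a ≥ 1, t > 0. -/
theorem stmt15 (a t : ℝ) (ha : 1 ≤ a) (ht : 0 < t) :
    a * Real.sinh ((a + 1) * t) ≤ (a + 1) * Real.exp t * Real.sinh (a * t) :=
  stmt15_general a t ha
end

section
/- Let p be a prime number and c₁, c₂ integers such that Δ := c₁² − 4c₂ is not a square in ℤ/pℤ. Then the polynomial X² − c₁X + c₂ is irreducible over ℚ; let K := ℚ[X]/(X² − c₁X + c₂) and let θ be the image of X in K. Then the trace Tr_{K/ℚ}( θ·(θ+1)·⋯·(θ+p) ) is a rational integer congruent to −Δ modulo p; in particular it is not divisible by p, and Tr_{K/ℚ}( θ·(θ+1)·⋯·(θ+p) )/(p+1)! is not an integer. -/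
/-!
Let `θ` be a root of `f = X² - c₁X + c₂`. Reducing `∏_{k ≤ p} (X + k)` modulo `f` over `ℤ` writes
`∏_{k ≤ p} (θ + k)` as `r₀ + r₁θ` with `r₀, r₁ ∈ ℤ`, so its trace over `ℚ` is the integer
`m = 2r₀ + c₁r₁`, and `m mod p` is the trace of the same product in `𝔽_p[X]/(f) ≅ 𝔽_{p²}`.
There `∏_{k < p} (θ + k) = θ^p - θ`, and the Frobenius sends `θ` to its conjugate `c₁ - θ`, so the
product is `(c₁ - 2θ)θ = 2c₂ - c₁θ`, of trace `4c₂ - c₁² = -Δ ≠ 0`. As `p ∣ (p+1)!`, neither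
`p` nor `(p+1)!` divides `m`.
-/

open Polynomial AdjoinRoot

noncomputable def monicQuadratic {R : Type*} [CommRing R] (a b : R) : R[X] :=
  X ^ 2 - C a * X + C b

section CommRing

variable {R : Type*} [CommRing R] (a b : R)

theorem monic_monicQuadratic [Nontrivial R] : (monicQuadratic a b).Monic := by
  unfold monicQuadratic; monicity!

theorem natDegree_monicQuadratic [Nontrivial R] : (monicQuadratic a b).natDegree = 2 := by
  unfold monicQuadratic; compute_degree!

theorem map_monicQuadratic {S : Type*} [CommRing S] (f : R →+* S) :
    (monicQuadratic a b).map f = monicQuadratic (f a) (f b) := by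
  simp [monicQuadratic]

variable {a b} in
theorem isSquare_discr_of_isRoot_monicQuadratic {r : R} (hr : (monicQuadratic a b).IsRoot r) :
    IsSquare (a ^ 2 - 4 * b) := by
  simp only [monicQuadratic, IsRoot, eval_add, eval_sub, eval_mul, eval_pow, eval_X,
    eval_C] at hr
  exact ⟨2 * r - a, by linear_combination -4 * hr⟩

theorem aeval_root_monicQuadratic [Nontrivial R] (g : R[X]) :
    aeval (root (monicQuadratic a b)) g =
      algebraMap R _ ((g %ₘ monicQuadratic a b).coeff 0) +
        (g %ₘ monicQuadratic a b).coeff 1 • root (monicQuadratic a b) := by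
  have hdeg : (g %ₘ monicQuadratic a b).natDegree ≤ 1 := by
    have := natDegree_modByMonic_lt g (monic_monicQuadratic a b)
      (fun h => by simpa [h] using natDegree_monicQuadratic a b)
    rw [natDegree_monicQuadratic] at this
    omega
  rw [aeval_eq, ← mk_leftInverse (monic_monicQuadratic a b) (mk _ g), modByMonicHom_mk,
    eq_X_add_C_of_natDegree_le_one hdeg]
  simp [Algebra.smul_def, add_comm]

end CommRing

section Field

variable {K : Type*} [Field K]

theorem irreducible_monicQuadratic (a b : K) (h : ¬ IsSquare (a ^ 2 - 4 * b)) :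
    Irreducible (monicQuadratic a b) :=
  irreducible_of_degree_le_three_of_not_isRoot (by simp [natDegree_monicQuadratic])
    fun _ hr => h (isSquare_discr_of_isRoot_monicQuadratic hr)

theorem trace_algebraMap_add_smul_root_monicQuadratic (a b u v : K) :
    Algebra.trace K (AdjoinRoot (monicQuadratic a b))
      (algebraMap K _ u + v • root (monicQuadratic a b)) = 2 * u + a * v := by
  have hmonic := monic_monicQuadratic a b
  let pb := powerBasis hmonic.ne_zero
  have : Nontrivial (AdjoinRoot (monicQuadratic a b)) := AdjoinRoot.nontrivial _ <| by
    simp [degree_eq_natDegree hmonic.ne_zero, natDegree_monicQuadratic]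
  have htrace_root : Algebra.trace K _ (root (monicQuadratic a b)) = a := by
    rw [← powerBasis_gen hmonic.ne_zero, pb.trace_gen_eq_nextCoeff_minpoly,
      minpoly_powerBasis_gen_of_monic hmonic, nextCoeff_of_natDegree_pos (by
        rw [natDegree_monicQuadratic]; omega), natDegree_monicQuadratic]
    simp [monicQuadratic]
  rw [map_add, map_smul, Algebra.trace_algebraMap_of_basis pb.basis, htrace_root]
  simp [pb, natDegree_monicQuadratic, mul_comm]

theorem algebraMap_ne_root_of_irreducible {f : K[X]} [Fact (Irreducible f)]
    (hf : f.natDegree ≠ 1) (r : K) : algebraMap K (AdjoinRoot f) r ≠ root f := by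
  intro hr
  have hroot : f.IsRoot r := by
    apply (algebraMap K (AdjoinRoot f)).injective
    rw [map_zero, ← aeval_algebraMap_apply_eq_algebraMap_eval, hr, aeval_eq, mk_self]
  exact hf (natDegree_eq_of_degree_eq_some
    (degree_eq_one_of_irreducible_of_root Fact.out hroot))

end Field

noncomputable def quadraticTrace (c₁ c₂ : ℤ) (g : ℤ[X]) : ℤ :=
  2 * (g %ₘ monicQuadratic c₁ c₂).coeff 0 + c₁ * (g %ₘ monicQuadratic c₁ c₂).coeff 1

theorem trace_eval₂_root_monicQuadratic_intCast (K : Type*) [Field K] (c₁ c₂ : ℤ) (g : ℤ[X]) :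
    Algebra.trace K (AdjoinRoot (monicQuadratic (c₁ : K) c₂))
      (g.eval₂ (Int.castRingHom _) (root (monicQuadratic (c₁ : K) c₂))) =
        quadraticTrace c₁ c₂ g := by
  have hmap : monicQuadratic (c₁ : K) c₂ = (monicQuadratic c₁ c₂).map (Int.castRingHom K) := by
    rw [map_monicQuadratic]; rfl
  rw [RingHom.ext_int (Int.castRingHom _) ((algebraMap K _).comp (Int.castRingHom K)),
    ← eval₂_map, ← aeval_def, aeval_root_monicQuadratic, hmap,
    ← map_modByMonic _ (monic_monicQuadratic _ _), ← hmap,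
    trace_algebraMap_add_smul_root_monicQuadratic, coeff_map, coeff_map, eq_intCast,
    eq_intCast, quadraticTrace]
  push_cast
  ring

theorem ascPochhammer_eval_eq_prod_range {S : Type*} [CommSemiring S] (n : ℕ) (s : S) :
    (ascPochhammer S n).eval s = ∏ k ∈ Finset.range n, (s + k) := by
  induction n with
  | zero => simp
  | succ n ih => rw [ascPochhammer_succ_eval, ih, Finset.prod_range_succ]

section CharP

variable {p : ℕ} [Fact p.Prime]

variable (p) in
theorem ascPochhammer_zmod_eq_X_pow_sub_X : ascPochhammer (ZMod p) p = X ^ p - X := by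
  have hp := (Fact.out : p.Prime).one_lt
  have hmonic : (X ^ p - X : (ZMod p)[X]).Monic :=
    monic_X_pow_sub (by rw [degree_X]; exact_mod_cast hp)
  have hdeg : (ascPochhammer (ZMod p) p).degree = p := by
    rw [degree_eq_natDegree (monic_ascPochhammer _ _).ne_zero, ascPochhammer_natDegree]
  refine eq_of_degree_le_of_eval_finset_eq Finset.univ (by rw [hdeg, Finset.card_univ, ZMod.card])
    ?_ (by rw [(monic_ascPochhammer _ _).leadingCoeff, hmonic.leadingCoeff]) fun x _ => ?_
  · rw [hdeg, degree_eq_natDegree hmonic.ne_zero, FiniteField.X_pow_card_sub_X_natDegree_eq _ hp]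
  · simp only [eval_sub, eval_pow, eval_X, ZMod.pow_card, sub_self]
    rw [ascPochhammer_eval_eq_zero_iff]
    exact ⟨(-x).val, ZMod.val_lt _, ZMod.natCast_zmod_val _⟩

variable {F : Type*} [CommRing F] [Algebra (ZMod p) F]

theorem ascPochhammer_eval_char_eq_pow_sub_self (x : F) :
    (ascPochhammer F p).eval x = x ^ p - x := by
  rw [← ascPochhammer_map (algebraMap (ZMod p) F), ascPochhammer_zmod_eq_X_pow_sub_X, eval_map]
  simp

variable [IsDomain F] {a b : ZMod p} {α : F}

theorem pow_char_eq_of_aeval_monicQuadratic (hα : aeval α (monicQuadratic a b) = 0)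
    (hα_not_mem : ∀ r : ZMod p, algebraMap (ZMod p) F r ≠ α) :
    α ^ p = algebraMap (ZMod p) F a - α := by
  have hroot : aeval (α ^ p) (monicQuadratic a b) = 0 := by
    have := aeval_algHom_apply (FiniteField.frobeniusAlgHom (ZMod p) F) α (monicQuadratic a b)
    rwa [hα, map_zero, FiniteField.coe_frobeniusAlgHom, ZMod.card] at this
  have hne : α ^ p - α ≠ 0 := by
    rw [← ascPochhammer_eval_char_eq_pow_sub_self, ne_eq, ascPochhammer_eval_eq_zero_iff]
    rintro ⟨k, -, hk⟩
    exact hα_not_mem (-k) (by rw [map_neg, map_natCast, hk, neg_neg])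
  simp only [monicQuadratic, map_add, map_sub, map_mul, map_pow, aeval_X, aeval_C] at hα hroot
  have hvieta : (α ^ p - α) * (α ^ p + α - algebraMap (ZMod p) F a) = 0 := by
    linear_combination hroot - hα
  linear_combination (mul_eq_zero.mp hvieta).resolve_left hne

theorem ascPochhammer_eval_char_add_one (hα : aeval α (monicQuadratic a b) = 0)
    (hα_not_mem : ∀ r : ZMod p, algebraMap (ZMod p) F r ≠ α) :
    (ascPochhammer F (p + 1)).eval α = algebraMap (ZMod p) F (2 * b) + (-a) • α := by
  have hp : (p : F) = 0 := by
    rw [← map_natCast (algebraMap (ZMod p) F), ZMod.natCast_self, map_zero]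
  rw [ascPochhammer_succ_eval, ascPochhammer_eval_char_eq_pow_sub_self,
    pow_char_eq_of_aeval_monicQuadratic hα hα_not_mem, hp, Algebra.smul_def]
  simp only [monicQuadratic, map_add, map_sub, map_mul, map_pow, aeval_X, aeval_C] at hα
  simp only [map_mul, map_ofNat, map_neg]
  linear_combination -2 * hα

theorem trace_ascPochhammer_eval_root_monicQuadratic (h : ¬ IsSquare (a ^ 2 - 4 * b)) :
    Algebra.trace (ZMod p) (AdjoinRoot (monicQuadratic a b))
      ((ascPochhammer _ (p + 1)).eval (root (monicQuadratic a b))) = -(a ^ 2 - 4 * b) := by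
  have := Fact.mk (irreducible_monicQuadratic a b h)
  rw [ascPochhammer_eval_char_add_one (F := AdjoinRoot (monicQuadratic a b))
    (by rw [aeval_eq, mk_self])
    (algebraMap_ne_root_of_irreducible (by simp [natDegree_monicQuadratic])),
    trace_algebraMap_add_smul_root_monicQuadratic]
  ring

end CharP

/-- Remark 3.9 (Claim): if Δ = c₁² − 4c₂ is not a square mod p, then
X² − c₁X + c₂ is irreducible over ℚ, and in K = ℚ[X]/(X² − c₁X + c₂) the
trace of θ(θ+1)⋯(θ+p) is a rational integer congruent to −Δ mod p, hence
not divisible by p, and its quotient by (p+1)! is not an integer. -/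
theorem stmt19 (p : ℕ) (hp : p.Prime) (c₁ c₂ : ℤ)
    (hns : ¬ IsSquare ((c₁ ^ 2 - 4 * c₂ : ℤ) : ZMod p)) :
    Irreducible
      (Polynomial.X ^ 2 - Polynomial.C (c₁ : ℚ) * Polynomial.X +
        Polynomial.C (c₂ : ℚ)) ∧
    ∃ m : ℤ,
      Algebra.trace ℚ
          (AdjoinRoot
            (Polynomial.X ^ 2 - Polynomial.C (c₁ : ℚ) * Polynomial.X +
              Polynomial.C (c₂ : ℚ)))
          (∏ k ∈ Finset.range (p + 1),
            (AdjoinRoot.root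
                (Polynomial.X ^ 2 - Polynomial.C (c₁ : ℚ) * Polynomial.X +
                  Polynomial.C (c₂ : ℚ)) + (k : AdjoinRoot _))) = (m : ℚ) ∧
      ((m : ZMod p) = ((-(c₁ ^ 2 - 4 * c₂) : ℤ) : ZMod p)) ∧
      ¬ ((p : ℤ) ∣ m) ∧
      ¬ ∃ q : ℤ, (m : ℚ) / (Nat.factorial (p + 1) : ℚ) = (q : ℚ) := by
  have := Fact.mk hp
  have hΔℚ : ¬ IsSquare ((c₁ : ℚ) ^ 2 - 4 * c₂) := fun h =>
    hns ((Rat.isSquare_intCast_iff.mp (by exact_mod_cast h)).map (Int.castRingHom (ZMod p)))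
  have hΔp : ¬ IsSquare ((c₁ : ZMod p) ^ 2 - 4 * c₂) := by exact_mod_cast hns
  set m := quadraticTrace c₁ c₂ (ascPochhammer ℤ (p + 1))
  have hm : (m : ZMod p) = ((-(c₁ ^ 2 - 4 * c₂) : ℤ) : ZMod p) := by
    rw [← trace_eval₂_root_monicQuadratic_intCast, ← ascPochhammer_eval₂,
      trace_ascPochhammer_eval_root_monicQuadratic hΔp]
    push_cast
    ring
  have hm_ndvd : ¬ (p : ℤ) ∣ m := by
    rw [← ZMod.intCast_zmod_eq_zero_iff_dvd, hm, Int.cast_neg, neg_eq_zero]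
    exact fun h0 => hns ⟨0, by rw [h0, mul_zero]⟩
  refine ⟨irreducible_monicQuadratic _ _ hΔℚ, m, ?_, hm, hm_ndvd, ?_⟩
  · rw [← trace_eval₂_root_monicQuadratic_intCast, ← ascPochhammer_eval₂,
      ascPochhammer_eval_eq_prod_range]
    rfl
  · rintro ⟨q, hq⟩
    rw [div_eq_iff (by positivity)] at hq
    have hpdvd : (p : ℤ) ∣ q * (p + 1).factorial :=
      dvd_mul_of_dvd_right (Int.natCast_dvd_natCast.mpr (Nat.dvd_factorial hp.pos (by omega))) q
    have hm_eq : m = q * (p + 1).factorial := by exact_mod_cast hq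
    exact hm_ndvd (hm_eq ▸ hpdvd)
end
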